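/- Let 0 ≤ λ < H, α = sqrt(1 + (H−λ)/(2λ)) (for λ > 0), q = (α−1)/(α+1), β = 1−q, C ∈ R, and d ≥ 2 even. Define F_1(x) = ((H−λ)/8)·(x_1² − 2Cx_1 + βx_d² + Σ_{i=1}^{d/2−1}(x_{2i+1} − x_{2i})²) + (λ/2)‖x‖² and F_2(x) = ((H−λ)/8)·Σ_{i=1}^{d/2}(x_{2i} − x_{2i−1})² + (λ/2)‖x‖², and let x* = C·Σ_{i=1}^d q^i·e_i be the minimizer of F = (1/2)(F_1 + F_2). Then ‖∇F_1(x*)‖ = ‖∇F_2(x*)‖, and the heterogeneity satisfies (1/2)·(‖∇F_1(x*)‖² + ‖∇F_2(x*)‖²) ≤ ((H+3λ)²/16)·‖x*‖² ≤ αC²(H+3λ)²/64. -/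

import Mathlib

/-!
Minimality of `x⋆` for `F = (F₁ + F₂)/2` forces `∇F₁(x⋆) = -∇F₂(x⋆)`, so only `∇F₂` has to be
computed. `F₂` couples the coordinates only within the pairs `(x_{2m}, x_{2m+1})`, and along the
geometric vector `x⋆_k = C q^{k+1}` the identity `(H - λ)(1 - q) = 4λ(α - 1)` gives
`∇F₂(x⋆)_k = (-1)^k λα x⋆_k`. Hence `‖∇F₁(x⋆)‖ = ‖∇F₂(x⋆)‖ = λα‖x⋆‖`, and
`(λα)² = λ(H + λ)/2 ≤ (H + 3λ)²/16`. Finally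
`‖x⋆‖² ≤ C² q²/(1 - q²) = C² (α - 1)²/(4α) ≤ αC²/4`.
-/

open Finset

noncomputable def coordCLM (d k : ℕ) : EuclideanSpace ℝ (Fin d) →L[ℝ] ℝ :=
  if h : k < d then EuclideanSpace.proj (⟨k, h⟩ : Fin d) else 0

lemma coordCLM_apply {d : ℕ} (k : ℕ) (x : EuclideanSpace ℝ (Fin d)) :
    coordCLM d k x = if h : k < d then x ⟨k, h⟩ else 0 := by
  unfold coordCLM; split_ifs <;> rfl

lemma sum_Icc_one_eq_sum_range {M : Type*} [AddCommMonoid M] (f : ℕ → M) (n : ℕ) :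
    ∑ i ∈ Icc 1 n, f i = ∑ m ∈ range n, f (m + 1) := by
  rw [range_eq_Ico, sum_Ico_add' f, ← Ico_add_one_right_eq_Icc]

lemma sum_range_two_mul {M : Type*} [AddCommMonoid M] (f : ℕ → M) (n : ℕ) :
    ∑ k ∈ range (2 * n), f k = ∑ m ∈ range n, (f (2 * m) + f (2 * m + 1)) := by
  induction n with
  | zero => simp
  | succ n ih => rw [Nat.mul_succ, sum_range_succ, sum_range_succ, sum_range_succ, ih, add_assoc]

lemma inner_eq_sum_range_coordCLM {d : ℕ} (x y : EuclideanSpace ℝ (Fin d)) :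
    inner ℝ x y = ∑ k ∈ range d, coordCLM d k x * coordCLM d k y := by
  rw [PiLp.inner_apply, ← Fin.sum_univ_eq_sum_range]
  refine sum_congr rfl fun k _ => ?_
  simp [coordCLM_apply, mul_comm]

lemma norm_sq_eq_sum_range_coordCLM {d : ℕ} (x : EuclideanSpace ℝ (Fin d)) :
    ‖x‖ ^ 2 = ∑ k ∈ range d, coordCLM d k x ^ 2 := by
  rw [← real_inner_self_eq_norm_sq, inner_eq_sum_range_coordCLM]
  simp only [sq]

lemma hasFDerivAt_sum_sq {E ι : Type*} [NormedAddCommGroup E] [NormedSpace ℝ E]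
    (s : Finset ι) (L : ι → E →L[ℝ] ℝ) (x : E) :
    HasFDerivAt (fun y => ∑ i ∈ s, (L i y) ^ 2) (∑ i ∈ s, (2 * L i x) • L i) x :=
  (HasFDerivAt.fun_sum fun i _ => ((L i).hasFDerivAt (x := x)).pow 2).congr_fderiv
    (sum_congr rfl fun i _ => by simp [two_smul, two_mul])

theorem hasGradientAt_pair_quadratic {d : ℕ} (hd : Even d) (a b : ℝ)
    {x g : EuclideanSpace ℝ (Fin d)}
    (h_even : ∀ m < d / 2, coordCLM d (2 * m) g =
      2 * a * (coordCLM d (2 * m) x - coordCLM d (2 * m + 1) x) + 2 * b * coordCLM d (2 * m) x)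
    (h_odd : ∀ m < d / 2, coordCLM d (2 * m + 1) g =
      2 * a * (coordCLM d (2 * m + 1) x - coordCLM d (2 * m) x) + 2 * b * coordCLM d (2 * m + 1) x) :
    HasGradientAt (fun y => a * ∑ i ∈ Icc 1 (d / 2),
      (coordCLM d (2 * i - 1) y - coordCLM d (2 * i - 2) y) ^ 2 + b * ‖y‖ ^ 2) g x := by
  obtain ⟨n, rfl⟩ := hd.two_dvd
  rw [Nat.mul_div_cancel_left n two_pos] at *
  have hD := ((hasFDerivAt_sum_sq (Icc 1 n)
    (fun i => coordCLM (2 * n) (2 * i - 1) - coordCLM (2 * n) (2 * i - 2)) x).const_mul a).add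
    ((hasFDerivAt_sum_sq (range (2 * n)) (coordCLM (2 * n)) x).const_mul b)
  simp only [norm_sq_eq_sum_range_coordCLM, hasGradientAt_iff_hasFDerivAt]
  refine hD.congr_fderiv (ContinuousLinearMap.ext fun v => ?_)
  simp only [InnerProductSpace.toDual_apply_apply, inner_eq_sum_range_coordCLM,
    sum_range_two_mul, sum_Icc_one_eq_sum_range, add_apply, smul_apply, sub_apply,
    _root_.sum_apply, smul_eq_mul, mul_sum, ← sum_add_distrib]
  refine sum_congr rfl fun m hm => ?_
  rw [mem_range] at hm
  rw [h_even m hm, h_odd m hm, show 2 * (m + 1) - 1 = 2 * m + 1 by omega,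
    show 2 * (m + 1) - 2 = 2 * m by omega]
  ring

noncomputable def altSign {d : ℕ} (x : EuclideanSpace ℝ (Fin d)) : EuclideanSpace ℝ (Fin d) :=
  WithLp.toLp 2 fun j => (-1) ^ (j : ℕ) * x j

lemma norm_altSign {d : ℕ} (x : EuclideanSpace ℝ (Fin d)) : ‖altSign x‖ = ‖x‖ := by
  simp [EuclideanSpace.norm_eq, altSign]

lemma coordCLM_altSign {d : ℕ} (k : ℕ) (x : EuclideanSpace ℝ (Fin d)) :
    coordCLM d k (altSign x) = (-1) ^ k * coordCLM d k x := by
  simp only [coordCLM_apply, altSign]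
  split_ifs <;> simp

lemma norm_sq_le_of_apply_eq_mul_pow {d : ℕ} {C q : ℝ} (hq : q ^ 2 < 1)
    {x : EuclideanSpace ℝ (Fin d)} (hx : ∀ i : Fin d, x i = C * q ^ ((i : ℕ) + 1)) :
    ‖x‖ ^ 2 ≤ C ^ 2 * (q ^ 2 / (1 - q ^ 2)) := by
  calc ‖x‖ ^ 2 = C ^ 2 * ∑ k ∈ Ico 1 (d + 1), (q ^ 2) ^ k := by
        rw [EuclideanSpace.norm_sq_eq, sum_Ico_eq_sum_range, mul_sum, Nat.add_sub_cancel,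
          ← Fin.sum_univ_eq_sum_range]
        refine sum_congr rfl fun i _ => ?_
        rw [hx, Real.norm_eq_abs, sq_abs]
        ring
    _ ≤ C ^ 2 * (q ^ 2 / (1 - q ^ 2)) := by
        simpa using mul_le_mul_of_nonneg_left
          (geom_sum_Ico_le_of_lt_one (m := 1) (n := d + 1) (sq_nonneg q) hq) (sq_nonneg C)

theorem gradient_eq_neg_of_forall_add_le {E : Type*} [NormedAddCommGroup E]
    [InnerProductSpace ℝ E] [CompleteSpace E] {f g : E → ℝ} {x : E}
    (hmin : ∀ y, f x + g x ≤ f y + g y) (hf : DifferentiableAt ℝ f x)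
    (hg : DifferentiableAt ℝ g x) : gradient f x = -gradient g x := by
  have h0 : fderiv ℝ (f + g) x = 0 :=
    ((isMinOn_univ_iff (f := f + g)).2 hmin).isLocalMin Filter.univ_mem |>.fderiv_eq_zero
  rw [fderiv_add hf hg] at h0
  rw [gradient, gradient, eq_neg_of_add_eq_zero_left h0, map_neg]

section HardInstance

variable {H lam α q : ℝ}

theorem hasGradientAt_hard_pair_quadratic (hHα : H - lam = 2 * lam * (α ^ 2 - 1))
    (hqα : q * (α + 1) = α - 1) {d : ℕ} (hd : Even d) {C : ℝ}
    {x : EuclideanSpace ℝ (Fin d)} (hx : ∀ i : Fin d, x i = C * q ^ ((i : ℕ) + 1)) :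
    HasGradientAt (fun y => (H - lam) / 8 * ∑ i ∈ Icc 1 (d / 2),
      (coordCLM d (2 * i - 1) y - coordCLM d (2 * i - 2) y) ^ 2 + lam / 2 * ‖y‖ ^ 2)
      ((lam * α) • altSign x) x := by
  have hcoord : ∀ k < d, coordCLM d k x = C * q ^ (k + 1) := fun k hk => by
    rw [coordCLM_apply, dif_pos hk, hx]
  have hk : ∀ m < d / 2, 2 * m + 1 < d := fun m hm => by
    obtain ⟨n, rfl⟩ := hd.two_dvd; omega
  apply hasGradientAt_pair_quadratic hd
  · intro m hm
    rw [map_smul, coordCLM_altSign, hcoord (2 * m) (by linarith [hk m hm]),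
      hcoord (2 * m + 1) (hk m hm), (even_two_mul m).neg_one_pow, smul_eq_mul]
    linear_combination
      (-C * q ^ (2 * m + 1) * (1 - q) / 4) * hHα + (C * q ^ (2 * m + 1) * lam * (α - 1) / 2) * hqα
  · intro m hm
    rw [map_smul, coordCLM_altSign, hcoord (2 * m) (by linarith [hk m hm]),
      hcoord (2 * m + 1) (hk m hm), (odd_two_mul_add_one m).neg_one_pow, smul_eq_mul]
    linear_combination
      (-C * q ^ (2 * m + 1) * (q - 1) / 4) * hHα - (C * q ^ (2 * m + 1) * lam * (α + 1) / 2) * hqα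

theorem sq_lam_mul_alpha_le (hHα : H - lam = 2 * lam * (α ^ 2 - 1)) :
    (lam * α) ^ 2 ≤ (H + 3 * lam) ^ 2 / 16 := by
  have h_gap : (H + 3 * lam) ^ 2 / 16 - (lam * α) ^ 2 = (H - lam) ^ 2 / 16 := by
    linear_combination (lam / 2) * hHα
  linarith [sq_nonneg (H - lam)]

theorem norm_sq_le_div_four_of_apply_eq_mul_pow (hα : 1 ≤ α) (hqα : q * (α + 1) = α - 1)
    {d : ℕ} {C : ℝ}
    {x : EuclideanSpace ℝ (Fin d)} (hx : ∀ i : Fin d, x i = C * q ^ ((i : ℕ) + 1)) :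
    ‖x‖ ^ 2 ≤ α * C ^ 2 / 4 := by
  have hq0 : 0 ≤ q := by nlinarith
  have hq1 : q < 1 := by nlinarith
  have hq_ratio : q ^ 2 / (1 - q ^ 2) ≤ α / 4 := by
    rw [div_le_iff₀ (by nlinarith)]
    nlinarith [mul_nonneg (sub_nonneg.2 hq1.le) (show 0 ≤ 1 + 3 * q by linarith),
      congrArg (· * (1 + q)) hqα]
  calc ‖x‖ ^ 2 ≤ C ^ 2 * (q ^ 2 / (1 - q ^ 2)) :=
        norm_sq_le_of_apply_eq_mul_pow (by nlinarith) hx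
    _ ≤ α * C ^ 2 / 4 := by nlinarith [sq_nonneg C]

end HardInstance

theorem hard_instance_heterogeneity_bound_general
    (d : ℕ) (hd : Even d)
    (H lam C : ℝ) (hlam : 0 < lam) (hH : lam < H)
    (α q β : ℝ)
    (hα : α = Real.sqrt (1 + (H - lam) / (2 * lam)))
    (hq : q = (α - 1) / (α + 1))
    (coord : EuclideanSpace ℝ (Fin d) → ℕ → ℝ)
    (hcoord : ∀ (x : EuclideanSpace ℝ (Fin d)) (k : ℕ),
      coord x k = if h : k < d then x ⟨k, h⟩ else 0)
    (F₁ F₂ F : EuclideanSpace ℝ (Fin d) → ℝ)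
    (hF₁ : ∀ x, F₁ x = (H - lam) / 8 *
      ((coord x 0) ^ 2 - 2 * C * coord x 0 + β * (coord x (d - 1)) ^ 2 +
        ∑ i ∈ Finset.Icc 1 (d / 2 - 1), (coord x (2 * i) - coord x (2 * i - 1)) ^ 2) +
      lam / 2 * ‖x‖ ^ 2)
    (hF₂ : ∀ x, F₂ x = (H - lam) / 8 *
      (∑ i ∈ Finset.Icc 1 (d / 2), (coord x (2 * i - 1) - coord x (2 * i - 2)) ^ 2) +
      lam / 2 * ‖x‖ ^ 2)
    (hF : ∀ x, F x = (F₁ x + F₂ x) / 2)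
    (xstar : EuclideanSpace ℝ (Fin d))
    (hxstar : ∀ i : Fin d, xstar i = C * q ^ ((i : ℕ) + 1))
    (hmin : ∀ y, F xstar ≤ F y) :
    ‖gradient F₁ xstar‖ = ‖gradient F₂ xstar‖ ∧
      (1 / 2) * (‖gradient F₁ xstar‖ ^ 2 + ‖gradient F₂ xstar‖ ^ 2) ≤
        (H + 3 * lam) ^ 2 / 16 * ‖xstar‖ ^ 2 ∧
      (H + 3 * lam) ^ 2 / 16 * ‖xstar‖ ^ 2 ≤ α * C ^ 2 * (H + 3 * lam) ^ 2 / 64 := by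
  have h_arg : 1 ≤ 1 + (H - lam) / (2 * lam) :=
    le_add_of_nonneg_right (div_nonneg (sub_nonneg.2 hH.le) (by positivity))
  have hα1 : 1 ≤ α := hα ▸ Real.one_le_sqrt.2 h_arg
  have hHα : H - lam = 2 * lam * (α ^ 2 - 1) := by
    rw [hα, Real.sq_sqrt (by linarith)]; field_simp; ring
  have hqα : q * (α + 1) = α - 1 := by rw [hq]; field_simp
  obtain rfl : coord = fun x k => coordCLM d k x :=
    funext₂ fun x k => by rw [hcoord, coordCLM_apply]
  have hgrad₂ : HasGradientAt F₂ ((lam * α) • altSign xstar) xstar :=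
    funext hF₂ ▸ hasGradientAt_hard_pair_quadratic hHα hqα hd hxstar
  have hdiff₁ : DifferentiableAt ℝ F₁ xstar := by
    rw [funext hF₁]; simp only [norm_sq_eq_sum_range_coordCLM]; fun_prop
  have hgrad₁ : gradient F₁ xstar = -gradient F₂ xstar :=
    gradient_eq_neg_of_forall_add_le (fun y => by linarith [hmin y, hF xstar, hF y]) hdiff₁
      hgrad₂.differentiableAt
  have hnorm₂ : ‖gradient F₂ xstar‖ = lam * α * ‖xstar‖ := by
    rw [hgrad₂.gradient, norm_smul, norm_altSign, Real.norm_of_nonneg (by positivity)]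
  have hx := norm_sq_le_div_four_of_apply_eq_mul_pow hα1 hqα hxstar
  refine ⟨by rw [hgrad₁, norm_neg], ?_, ?_⟩
  · rw [hgrad₁, norm_neg, hnorm₂]
    nlinarith [sq_lam_mul_alpha_le hHα, sq_nonneg ‖xstar‖]
  · nlinarith [sq_nonneg (H + 3 * lam)]

/-- Heterogeneity of the hard pair `F₁, F₂` at the minimizer
`x⋆ = C Σ_i qⁱ e_i` of `F = (F₁ + F₂)/2`: `‖∇F₁(x⋆)‖ = ‖∇F₂(x⋆)‖` and
`(1/2)(‖∇F₁(x⋆)‖² + ‖∇F₂(x⋆)‖²) ≤ ((H+3λ)²/16)‖x⋆‖² ≤ αC²(H+3λ)²/64`. -/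
theorem hard_instance_heterogeneity_bound
    (d : ℕ) (hd : Even d) (hd2 : 2 ≤ d)
    (H lam C : ℝ) (hlam : 0 < lam) (hH : lam < H)
    (α q β : ℝ)
    (hα : α = Real.sqrt (1 + (H - lam) / (2 * lam)))
    (hq : q = (α - 1) / (α + 1))
    (hβ : β = 1 - q)
    (coord : EuclideanSpace ℝ (Fin d) → ℕ → ℝ)
    (hcoord : ∀ (x : EuclideanSpace ℝ (Fin d)) (k : ℕ),
      coord x k = if h : k < d then x ⟨k, h⟩ else 0)
    (F₁ F₂ F : EuclideanSpace ℝ (Fin d) → ℝ)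
    (hF₁ : ∀ x, F₁ x = (H - lam) / 8 *
      ((coord x 0) ^ 2 - 2 * C * coord x 0 + β * (coord x (d - 1)) ^ 2 +
        ∑ i ∈ Finset.Icc 1 (d / 2 - 1), (coord x (2 * i) - coord x (2 * i - 1)) ^ 2) +
      lam / 2 * ‖x‖ ^ 2)
    (hF₂ : ∀ x, F₂ x = (H - lam) / 8 *
      (∑ i ∈ Finset.Icc 1 (d / 2), (coord x (2 * i - 1) - coord x (2 * i - 2)) ^ 2) +
      lam / 2 * ‖x‖ ^ 2)
    (hF : ∀ x, F x = (F₁ x + F₂ x) / 2)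
    (xstar : EuclideanSpace ℝ (Fin d))
    (hxstar : ∀ i : Fin d, xstar i = C * q ^ ((i : ℕ) + 1))
    (hmin : ∀ y, F xstar ≤ F y) :
    ‖gradient F₁ xstar‖ = ‖gradient F₂ xstar‖ ∧
      (1 / 2) * (‖gradient F₁ xstar‖ ^ 2 + ‖gradient F₂ xstar‖ ^ 2) ≤
        (H + 3 * lam) ^ 2 / 16 * ‖xstar‖ ^ 2 ∧
      (H + 3 * lam) ^ 2 / 16 * ‖xstar‖ ^ 2 ≤ α * C ^ 2 * (H + 3 * lam) ^ 2 / 64 :=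
  hard_instance_heterogeneity_bound_general d hd H lam C hlam hH α q β hα hq coord hcoord F₁ F₂ F
    hF₁ hF₂ hF xstar hxstar hmin
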